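/- Let A be a cyclic c-noncrossing arc diagram and γ, γ' two disjoint partial chains of A with min(γ) < min(γ') < max(γ). Then exactly one of the following holds: (a) min(γ) < min(γ') < max(γ) < max(γ') and the pair (min(γ'), max(γ)) has one coordinate in L̄_c and the other in R̄_c; or (b) min(γ) < min(γ') ≤ max(γ') < max(γ) and min(γ'), max(γ') both lie in L̄_c or both lie in R̄_c. -/

import Mathlib

open scoped Classical

noncomputable section

/-- `x` lies in `S + nℤ` (e.g. `x ∈ L̄_c` for `S = L_c`). -/
def inBar (n : ℕ) (S : Finset ℤ) (x : ℤ) : Prop := ∃ s ∈ S, (n : ℤ) ∣ (x - s)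

/-- The set of points strictly between the endpoints of the arc `p → q` passing on its
left, i.e. lying in `L̄_c`. -/
def arcLeft (n : ℕ) (Lc : Finset ℤ) (p q : ℤ) : Set ℤ :=
  {x | p < x ∧ x < q ∧ inBar n Lc x}

/-- The set of points strictly between the endpoints of the arc `p → q` passing on its
right, i.e. lying in `R̄_c`. -/
def arcRight (n : ℕ) (Rc : Finset ℤ) (p q : ℤ) : Set ℤ :=
  {x | p < x ∧ x < q ∧ inBar n Rc x}

/-- Two arcs `a = (p,q,L,R)` and `b = (p',q',L',R')` (with `L`, `R` determined by the
endpoints as the points of `L̄_c`, `R̄_c` between them) cross: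
`((L∪{p,q})∩R') ∪ (L∩{p',q'}) ≠ ∅` and `(R∩(L'∪{p',q'})) ∪ ({p,q}∩L') ≠ ∅`. -/
def Cross (n : ℕ) (Lc Rc : Finset ℤ) (a b : ℤ × ℤ) : Prop :=
  (((arcLeft n Lc a.1 a.2 ∪ {a.1, a.2}) ∩ arcRight n Rc b.1 b.2) ∪
      (arcLeft n Lc a.1 a.2 ∩ {b.1, b.2})).Nonempty ∧
  ((arcRight n Rc a.1 a.2 ∩ (arcLeft n Lc b.1 b.2 ∪ {b.1, b.2})) ∪
      ({a.1, a.2} ∩ arcLeft n Lc b.1 b.2)).Nonempty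

/-- A cyclic `c`-noncrossing arc diagram on `n` points: a translation-invariant (by `n`)
collection of pairwise noncrossing arcs `p → q` (`p < q`, `p ≢ q (mod n)`), each with its
left points in `L̄_c` and right points in `R̄_c` (so it is determined by its endpoints),
all of whose loops are real. -/
structure CNCAD (n : ℕ) (Lc Rc : Finset ℤ) where
  arcs : Set (ℤ × ℤ)
  incr : ∀ a ∈ arcs, a.1 < a.2
  distinctRes : ∀ a ∈ arcs, ¬ (n : ℤ) ∣ (a.2 - a.1)
  inv : ∀ p q : ℤ, (p, q) ∈ arcs ↔ (p + n, q + n) ∈ arcs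
  noncross : ∀ a ∈ arcs, ∀ b ∈ arcs, a ≠ b → ¬ Cross n Lc Rc a b
  realLoop : ∀ g : ℤ → ℤ, (∀ t : ℤ, (g t, g (t + 1)) ∈ arcs) →
    (∃ t : ℤ, inBar n Lc (g t)) ∧ (∃ t : ℤ, inBar n Rc (g t))

/-- A partial chain of the diagram `A`: a finite sequence of at least two points in which
each consecutive pair is an arc of `A` (so the final point of each arc is the initial
point of the next). Its minimum is its head and its maximum its last element. -/
def IsPChain {n : ℕ} {Lc Rc : Finset ℤ} (A : CNCAD n Lc Rc) (l : List ℤ) : Prop :=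
  2 ≤ l.length ∧ l.Chain' (fun a b => (a, b) ∈ A.arcs)

/-!
For an arc `p → q` of `γ'` with `min γ < p < max γ`, let `x → y` be the arc of `γ` with
`x < p < y`. By the crossing criterion, if `q < y` the two arcs are nested and `p`, `q` lie on
the same side. Otherwise `y < q`, so `p` and `y` lie on opposite sides; following `γ` from `y`,
its arcs stay nested in `p → q` (keeping the side) until either `γ` ends, and then `p` and
`max γ` lie on opposite sides, or an arc of `γ` jumps over `q`, and then `p` and `q` lie on the
same side. So every arc of `γ'` ending below `max γ` keeps the side, and the first arc passing
`max γ` starts on the side opposite to `max γ`; induction along `γ'` gives the dichotomy.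
-/

theorem List.IsChain.le_getLastD {α : Type*} [Preorder α] :
    ∀ {x : α} {l : List α}, (x :: l).IsChain (· ≤ ·) → x ≤ l.getLastD x
  | _, [], _ => le_rfl
  | _, _ :: _, h => by
    rw [getLastD_cons]
    exact (isChain_cons_cons.1 h).1.trans (le_getLastD (isChain_cons_cons.1 h).2)

theorem List.getLastI_cons {α : Type*} [Inhabited α] (x : α) (l : List α) :
    (x :: l).getLastI = l.getLastD x := by
  simp [List.getLastI_eq_getLast?_getD, List.getLast?_cons]

theorem inBar_iff_emod_add_one_mem {n : ℕ} {S : Finset ℤ} (hS : S ⊆ Finset.Icc 1 (n : ℤ))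
    {x : ℤ} : inBar n S x ↔ (x - 1) % n + 1 ∈ S := by
  constructor
  · rintro ⟨s, hs, hdvd⟩
    have hs' := Finset.mem_Icc.1 (hS hs)
    have hmod : (x - 1) % n = (s - 1) % n :=
      (Int.modEq_iff_dvd.2 (by simpa using hdvd)).symm
    rwa [hmod, Int.emod_eq_of_lt (by omega) (by omega), sub_add_cancel]
  · intro hr
    refine ⟨_, hr, ?_⟩
    convert Int.dvd_self_sub_emod (x := x - 1) (m := (n : ℤ)) using 1
    ring

theorem inBar_right_iff_not_left {n : ℕ} {Lc Rc : Finset ℤ} (hn : 0 < n)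
    (hdis : Disjoint Lc Rc) (hun : Lc ∪ Rc = Finset.Icc 1 (n : ℤ)) (x : ℤ) :
    inBar n Rc x ↔ ¬ inBar n Lc x := by
  have hr : (x - 1) % n + 1 ∈ Lc ∪ Rc := by
    have := Int.emod_nonneg (x - 1) (b := n) (by omega)
    have := Int.emod_lt_of_pos (x - 1) (b := n) (by omega)
    rw [hun, Finset.mem_Icc]
    omega
  rw [inBar_iff_emod_add_one_mem (hun ▸ Finset.subset_union_right),
    inBar_iff_emod_add_one_mem (hun ▸ Finset.subset_union_left)]
  rw [Finset.mem_union] at hr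
  exact ⟨fun hR hL => Finset.disjoint_left.1 hdis hL hR, hr.resolve_left⟩

section SideRule

variable {α : Type*} [LinearOrder α] (σ : α → Prop)

/-- Cases (b) and (a) of the theorem for a chain from `x` to `y` against a chain ending at `m`,
with `σ` the side `L̄_c`. -/
def SideRule (m x y : α) : Prop :=
  (y < m → (σ x ↔ σ y)) ∧ (m < y → ¬ (σ x ↔ σ m))

variable {σ}

theorem sideRule_self {m x : α} (h : x < m) : SideRule σ m x x :=
  ⟨fun _ => Iff.rfl, fun h' => (lt_asymm h h').elim⟩

theorem SideRule.trans {m x y z : α} (hxy : SideRule σ m x y) (hyz : y < m → SideRule σ m y z)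
    (hle : y ≤ z) (hym : y ≠ m) : SideRule σ m x z := by
  rcases hym.lt_or_gt with hym | hmy
  · obtain ⟨h₁, h₂⟩ := hyz hym
    have hsame := hxy.1 hym
    exact ⟨fun hz => hsame.trans (h₁ hz), fun hz h => h₂ hz (hsame.symm.trans h)⟩
  · exact ⟨fun hz => absurd (hmy.trans_le hle) hz.not_gt, fun _ => hxy.2 hmy⟩

theorem SideRule.swap {p q y m : α} (h : SideRule σ q y m) (hpy : ¬ (σ p ↔ σ y)) :
    SideRule σ m p q :=
  ⟨fun hqm => by have := h.2 hqm; tauto, fun hmq => by have := h.1 hmq; tauto⟩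

theorem sideRule_getLastD_of_isChain {r : α → α → Prop} {P : α → Prop} {lo m : α}
    (hlt : ∀ a b, r a b → a < b) (hm : ¬ P m)
    (hstep : ∀ a b, r a b → lo < a → a < m → P a → P b → SideRule σ m a b) :
    ∀ {x : α} {l : List α}, (x :: l).IsChain r → (∀ y ∈ x :: l, P y) → lo < x → x < m →
      SideRule σ m x (l.getLastD x)
  | x, [], _, _, _, hxm => sideRule_self hxm
  | x, y :: l, hch, hP, hlo, hxm => by
    obtain ⟨hxy, hch'⟩ := List.isChain_cons_cons.1 hch
    rw [List.getLastD_cons]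
    have hPy : P y := hP y (by simp)
    refine (hstep x y hxy hlo hxm (hP x (by simp)) hPy).trans (fun hym => ?_)
      (hch'.imp fun a b hab => (hlt a b hab).le).le_getLastD (fun h => hm (h ▸ hPy))
    exact sideRule_getLastD_of_isChain hlt hm hstep hch' (fun z hz => hP z (by simp [hz]))
      (hlo.trans (hlt x y hxy)) hym

end SideRule

namespace CNCAD

variable {n : ℕ} {Lc Rc : Finset ℤ}

def Arc (A : CNCAD n Lc Rc) (a b : ℤ) : Prop := (a, b) ∈ A.arcs

variable {A : CNCAD n Lc Rc}

theorem Arc.lt {a b : ℤ} (h : A.Arc a b) : a < b := A.incr _ h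

theorem inBar_iff_of_nested (hside : ∀ x, inBar n Rc x ↔ ¬ inBar n Lc x) {p q s t : ℤ}
    (hpq : A.Arc p q) (hst : A.Arc s t) (hps : p < s) (htq : t < q) :
    inBar n Lc s ↔ inBar n Lc t := by
  by_contra h
  have hsides : (inBar n Lc s ∧ inBar n Rc t) ∨ (inBar n Rc s ∧ inBar n Lc t) := by
    simp only [hside]
    tauto
  have hne : ((p, q) : ℤ × ℤ) ≠ (s, t) := ne_of_apply_ne Prod.fst hps.ne
  have hsq : s < q := hst.lt.trans htq
  have hpt : p < t := hps.trans hst.lt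
  rcases hsides with ⟨hs, ht⟩ | ⟨hs, ht⟩
  · exact A.noncross _ hpq _ hst hne
      ⟨⟨s, .inr ⟨⟨hps, hsq, hs⟩, by simp⟩⟩, ⟨t, .inl ⟨⟨hpt, htq, ht⟩, .inr (by simp)⟩⟩⟩
  · exact A.noncross _ hpq _ hst hne
      ⟨⟨t, .inr ⟨⟨hpt, htq, ht⟩, by simp⟩⟩, ⟨s, .inl ⟨⟨hps, hsq, hs⟩, .inr (by simp)⟩⟩⟩

theorem not_inBar_iff_of_interleaved (hside : ∀ x, inBar n Rc x ↔ ¬ inBar n Lc x)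
    {p q s t : ℤ} (hpq : A.Arc p q) (hst : A.Arc s t) (hps : p < s) (hsq : s < q)
    (hqt : q < t) : ¬ (inBar n Lc s ↔ inBar n Lc q) := by
  intro h
  have hsides : (inBar n Lc s ∧ inBar n Lc q) ∨ (inBar n Rc s ∧ inBar n Rc q) := by
    simp only [hside]
    tauto
  rcases hsides with ⟨hs, hq⟩ | ⟨hs, hq⟩
  · exact A.noncross _ hst _ hpq (ne_of_apply_ne Prod.fst hps.ne')
      ⟨⟨q, .inr ⟨⟨hsq, hqt, hq⟩, by simp⟩⟩, ⟨s, .inr ⟨by simp, ⟨hps, hsq, hs⟩⟩⟩⟩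
  · exact A.noncross _ hpq _ hst (ne_of_apply_ne Prod.fst hps.ne)
      ⟨⟨q, .inl ⟨.inr (by simp), ⟨hsq, hqt, hq⟩⟩⟩, ⟨s, .inl ⟨⟨hps, hsq, hs⟩, .inr (by simp)⟩⟩⟩

theorem sideRule_of_arc_inside_arc (hside : ∀ x, inBar n Rc x ↔ ¬ inBar n Lc x)
    {p q x y : ℤ} (hpq : A.Arc p q) (hxy : A.Arc x y) (hpx : p < x) (hxq : x < q) :
    SideRule (inBar n Lc) q x y :=
  ⟨fun hyq => inBar_iff_of_nested hside hpq hxy hpx hyq,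
    fun hqy => not_inBar_iff_of_interleaved hside hpq hxy hpx hxq hqy⟩

theorem sideRule_of_chain_inside_arc (hside : ∀ x, inBar n Rc x ↔ ¬ inBar n Lc x)
    {p q x : ℤ} {l : List ℤ} (hpq : A.Arc p q) (hch : (x :: l).IsChain A.Arc)
    (hpx : p < x) (hxq : x < q) (hq : q ∉ l) :
    SideRule (inBar n Lc) q x (l.getLastD x) :=
  sideRule_getLastD_of_isChain (P := (· ≠ q)) (fun _ _ h => h.lt) (fun h => h rfl)
    (fun _ _ hab hpa haq _ _ => sideRule_of_arc_inside_arc hside hpq hab hpa haq) hch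
    (fun y hy => by
      rcases List.mem_cons.1 hy with rfl | hy
      exacts [hxq.ne, fun h => hq (h ▸ hy)])
    hpx hxq

theorem sideRule_of_arc_across_chain (hside : ∀ x, inBar n Rc x ↔ ¬ inBar n Lc x)
    {p q : ℤ} (hpq : A.Arc p q) :
    ∀ {x : ℤ} {l : List ℤ}, (x :: l).IsChain A.Arc → x < p → p < l.getLastD x → p ∉ l →
      q ∉ l → SideRule (inBar n Lc) (l.getLastD x) p q
  | x, [], _, hxp, hpx, _, _ => absurd (hxp.trans hpx) (lt_irrefl x)
  | x, y :: l, hch, hxp, hpm, hp, hq => by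
    obtain ⟨hxy, hch'⟩ := List.isChain_cons_cons.1 hch
    rw [List.getLastD_cons] at hpm ⊢
    have hyp : y ≠ p := fun h => hp (h ▸ List.mem_cons_self)
    have hyq : y ≠ q := fun h => hq (h ▸ List.mem_cons_self)
    rcases hyp.lt_or_gt with hyp | hpy
    · exact sideRule_of_arc_across_chain hside hpq hch' hyp hpm (fun h => hp (.tail _ h))
        (fun h => hq (.tail _ h))
    rcases hyq.lt_or_gt with hyq | hqy
    · exact (sideRule_of_chain_inside_arc hside hpq hch' hpy hyq (fun h => hq (.tail _ h))).swap
        (not_inBar_iff_of_interleaved hside hxy hpq hxp hpy hyq)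
    · have hle : y ≤ l.getLastD y := (hch'.imp fun _ _ hab => hab.lt.le).le_getLastD
      exact ⟨fun _ => inBar_iff_of_nested hside hxy hpq hxp hqy,
        fun hmq => absurd (hqy.trans_le hle) hmq.not_gt⟩

theorem sideRule_of_disjoint_chains (hside : ∀ x, inBar n Rc x ↔ ¬ inBar n Lc x)
    {x x' : ℤ} {l l' : List ℤ} (hγ : (x :: l).IsChain A.Arc) (hγ' : (x' :: l').IsChain A.Arc)
    (hdisj : ∀ y ∈ x' :: l', y ∉ x :: l) (hxx' : x < x') (hx'm : x' < l.getLastD x) :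
    SideRule (inBar n Lc) (l.getLastD x) x' (l'.getLastD x') :=
  sideRule_getLastD_of_isChain (P := (· ∉ x :: l)) (fun _ _ h => h.lt)
    (fun h => h List.getLastD_mem_cons)
    (fun _ _ hab hxa ham ha hb => sideRule_of_arc_across_chain hside hab hγ hxa ham
      (fun h => ha (.tail _ h)) (fun h => hb (.tail _ h)))
    hγ' hdisj hxx' hx'm

end CNCAD

theorem statement15_general (n : ℕ) (hn : 0 < n) (Lc Rc : Finset ℤ)
    (hdis : Disjoint Lc Rc) (hun : Lc ∪ Rc = Finset.Icc (1 : ℤ) (n : ℤ))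
    (A : CNCAD n Lc Rc) (γ γ' : List ℤ)
    (hγ : IsPChain A γ) (hγ' : IsPChain A γ')
    (hdisj : ∀ x ∈ γ, x ∉ γ')
    (h1 : γ.headI < γ'.headI) (h2 : γ'.headI < γ.getLastI) :
    Xor'
      (γ.getLastI < γ'.getLastI ∧
        ((inBar n Lc γ'.headI ∧ inBar n Rc γ.getLastI) ∨
         (inBar n Rc γ'.headI ∧ inBar n Lc γ.getLastI)))
      (γ'.getLastI < γ.getLastI ∧
        ((inBar n Lc γ'.headI ∧ inBar n Lc γ'.getLastI) ∨
         (inBar n Rc γ'.headI ∧ inBar n Rc γ'.getLastI))) := by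
  obtain ⟨hlen, hch⟩ := hγ
  obtain ⟨hlen', hch'⟩ := hγ'
  obtain ⟨x, l, rfl⟩ := List.exists_cons_of_length_pos (by omega : 0 < γ.length)
  obtain ⟨x', l', rfl⟩ := List.exists_cons_of_length_pos (by omega : 0 < γ'.length)
  simp only [List.headI_cons, List.getLastI_cons] at h1 h2 ⊢
  have hside := inBar_right_iff_not_left hn hdis hun
  have hrule := CNCAD.sideRule_of_disjoint_chains hside hch hch'
    (fun y hy hyγ => hdisj y hyγ hy) h1 h2
  have hne : l.getLastD x ≠ l'.getLastD x' := fun h =>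
    hdisj _ List.getLastD_mem_cons (h ▸ List.getLastD_mem_cons)
  simp only [hside]
  rcases hne.lt_or_gt with hlt | hgt
  · have := hrule.2 hlt
    exact .inl ⟨⟨hlt, by tauto⟩, fun h => hlt.not_gt h.1⟩
  · have := hrule.1 hgt
    exact .inr ⟨⟨hgt, by tauto⟩, fun h => hgt.not_gt h.1⟩

theorem statement15 (n : ℕ) (hn : 0 < n) (Lc Rc : Finset ℤ)
    (hdis : Disjoint Lc Rc) (hun : Lc ∪ Rc = Finset.Icc (1 : ℤ) (n : ℤ))
    (hLne : Lc.Nonempty) (hRne : Rc.Nonempty)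
    (A : CNCAD n Lc Rc) (γ γ' : List ℤ)
    (hγ : IsPChain A γ) (hγ' : IsPChain A γ')
    (hdisj : ∀ x ∈ γ, x ∉ γ')
    (h1 : γ.headI < γ'.headI) (h2 : γ'.headI < γ.getLastI) :
    Xor'
      (γ.getLastI < γ'.getLastI ∧
        ((inBar n Lc γ'.headI ∧ inBar n Rc γ.getLastI) ∨
         (inBar n Rc γ'.headI ∧ inBar n Lc γ.getLastI)))
      (γ'.getLastI < γ.getLastI ∧
        ((inBar n Lc γ'.headI ∧ inBar n Lc γ'.getLastI) ∨
         (inBar n Rc γ'.headI ∧ inBar n Rc γ'.getLastI))) :=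
  statement15_general n hn Lc Rc hdis hun A γ γ' hγ hγ' hdisj h1 h2

end
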